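/- Let α, β, α₀, β₁ ∈ ℝ. Let f ∈ ℝ[[X]] satisfy f(0) = 0 and f' = 1 + α·f + β·f², and let g ∈ ℝ[[X]] satisfy g(0) = 1 and g' = (α₀ + β₁·f)·g. Let f̄ be the compositional inverse of f, h = (g∘f̄)⁻¹, and p_n(X) = ∑_{k=0}^{n} (n!/k!)·([Xⁿ](h·f̄ᵏ))·Xᵏ ∈ ℝ[X]. If 𝓛 : ℝ[X] → ℝ is any linear functional with 𝓛(p_0) = 1 and 𝓛(p_i) = 0 for all i ≥ 1, then for every n ∈ ℕ, 𝓛(Xⁿ) = n!·[Xⁿ]g. In other words, the moments μ_n of the orthogonal polynomial family whose coefficient array is [g,f]⁻¹ are given by the entries n!·[Xⁿ]g of the first column of the exponential Riordan array [g,f]. -/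

import Mathlib

/-!
Composition of exponential Riordan arrays, `[a, u]·[b, v] = [a·(b∘u), v∘u]` for `u(0) = 0`,
shows that the coefficient array `[h, f̄]` of the `p n` is a left inverse of `[g, f]`, since
`[h·(g∘f̄), f∘f̄] = [1, X]` is the identity. As `[h, f̄]` is lower triangular, this already holds
for the finite truncations, where a left inverse is also a right inverse; this expresses
`Xⁿ = ∑ₖ [g, f]ₙₖ·p k`, and `𝓛` keeps only the term `k = 0`, namely `n!·[Xⁿ]g`.
-/

/-- Substitution (composition) of formal power series: `psComp h u = h ∘ u`,
the series obtained by substituting `u` (with zero constant term) into `h`. -/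
noncomputable def psComp (h u : PowerSeries ℝ) : PowerSeries ℝ :=
  PowerSeries.mk fun n =>
    ∑ k ∈ Finset.range (n + 1), PowerSeries.coeff (R := ℝ) k h * PowerSeries.coeff (R := ℝ) n (u ^ k)

open PowerSeries Finset

section Substitution

variable {R : Type*} [CommRing R] {u : R⟦X⟧}

theorem coeff_pow_eq_zero_of_lt (hu : constantCoeff u = 0) {n k : ℕ} (h : n < k) :
    coeff n (u ^ k) = 0 :=
  coeff_of_lt_order n <| (Nat.cast_lt.2 h).trans_le (le_order_pow_of_constantCoeff_eq_zero k hu)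

theorem coeff_subst_eq_sum_range (hu : constantCoeff u = 0) (w : R⟦X⟧) {n N : ℕ} (hn : n < N) :
    coeff n (w.subst u) = ∑ k ∈ range N, coeff k w * coeff n (u ^ k) := by
  rw [coeff_subst' (HasSubst.of_constantCoeff_zero' hu)]
  refine finsum_eq_sum_of_support_subset _ fun k hk => ?_
  contrapose! hk
  rw [coe_range, Set.mem_Iio, not_lt] at hk
  simp [coeff_pow_eq_zero_of_lt hu (hn.trans_le hk)]

theorem coeff_mul_subst (hu : constantCoeff u = 0) (a w : R⟦X⟧) (n : ℕ) :
    coeff n (a * w.subst u) = ∑ k ∈ range (n + 1), coeff k w * coeff n (a * u ^ k) := by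
  simp_rw [coeff_mul, mul_sum]
  rw [sum_comm]
  refine sum_congr rfl fun ij hij => ?_
  rw [coeff_subst_eq_sum_range hu w (Finset.Nat.antidiagonal.snd_lt hij), mul_sum]
  exact sum_congr rfl fun k _ => by ring

end Substitution

theorem psComp_eq_subst (h : ℝ⟦X⟧) {u : ℝ⟦X⟧} (hu : constantCoeff u = 0) :
    psComp h u = h.subst u := by
  ext n
  rw [psComp, coeff_mk, coeff_subst_eq_sum_range hu h n.lt_succ_self]

theorem constantCoeff_psComp (h u : ℝ⟦X⟧) : constantCoeff (psComp h u) = constantCoeff h := by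
  simp [← coeff_zero_eq_constantCoeff, psComp]

section Riordan

variable {K : Type*} [Field K]

noncomputable def expRiordan (g f : K⟦X⟧) (n k : ℕ) : K :=
  (n.factorial : K) / (k.factorial : K) * coeff n (g * f ^ k)

theorem sum_expRiordan_mul_expRiordan [CharZero K] {a u : K⟦X⟧} (hu : constantCoeff u = 0) (b v : K⟦X⟧)
    (n m : ℕ) :
    ∑ k ∈ range (n + 1), expRiordan a u n k * expRiordan b v k m =
      expRiordan (a * b.subst u) (v.subst u) n m := by
  have hu' := HasSubst.of_constantCoeff_zero' hu
  rw [expRiordan, mul_assoc, ← subst_pow hu', ← subst_mul hu', coeff_mul_subst hu, mul_sum]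
  refine sum_congr rfl fun k _ => ?_
  have hk : (k.factorial : K) ≠ 0 := Nat.cast_ne_zero.2 k.factorial_ne_zero
  simp only [expRiordan]
  field_simp

theorem expRiordan_one_X [CharZero K] (n m : ℕ) :
    expRiordan (1 : K⟦X⟧) X n m = if n = m then 1 else 0 := by
  rw [expRiordan, one_mul, coeff_X_pow]
  split_ifs with h
  · simp [h, Nat.factorial_ne_zero]
  · simp

end Riordan

section LowerTriangular

variable {R : Type*} [CommRing R] {P L : ℕ → ℕ → R}

theorem sum_range_mul_eq_ite_comm (hP : ∀ n k, n < k → P n k = 0)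
    (hPL : ∀ n m, ∑ k ∈ range (n + 1), P n k * L k m = if n = m then 1 else 0)
    {n m : ℕ} (hmn : m ≤ n) :
    ∑ k ∈ range (n + 1), L n k * P k m = if n = m then 1 else 0 := by
  let A : Matrix (Fin (n + 1)) (Fin (n + 1)) R := Matrix.of fun i j => P i j
  let B : Matrix (Fin (n + 1)) (Fin (n + 1)) R := Matrix.of fun i j => L i j
  have hAB : A * B = 1 := by
    ext i j
    rw [Matrix.mul_apply, Matrix.one_apply, if_congr Fin.val_inj.symm rfl rfl, ← hPL]
    simp only [A, B, Matrix.of_apply]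
    rw [Fin.sum_univ_eq_sum_range (fun k => P i k * L k j)]
    refine (sum_subset (range_subset_range.2 i.isLt) fun k _ hk => ?_).symm
    rw [hP i k (by simpa using hk), zero_mul]
  have hBA : B * A = 1 := mul_eq_one_comm.1 hAB
  replace hBA := congr_fun₂ hBA (Fin.last n) ⟨m, Nat.lt_succ_of_le hmn⟩
  rw [Matrix.mul_apply, Matrix.one_apply] at hBA
  simp only [A, B, Matrix.of_apply, Fin.val_last] at hBA
  rw [← Fin.sum_univ_eq_sum_range (fun k => L n k * P k m), hBA]
  exact if_congr (by simp [Fin.ext_iff]) rfl rfl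

theorem X_pow_eq_sum_smul_of_sum_mul_eq_ite (p : ℕ → Polynomial R)
    (hp : ∀ n, p n = ∑ k ∈ range (n + 1), Polynomial.C (P n k) * Polynomial.X ^ k)
    (hPL : ∀ n m, ∑ k ∈ range (n + 1), P n k * L k m = if n = m then 1 else 0) (n : ℕ) :
    Polynomial.X ^ n = ∑ k ∈ range (n + 1), L n k • p k := by
  have hcoeff (k m : ℕ) : (p k).coeff m = if m ≤ k then P k m else 0 := by
    simp [hp]
  ext m
  rw [Polynomial.coeff_X_pow, Polynomial.finsetSum_coeff]
  simp only [Polynomial.coeff_smul, smul_eq_mul]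
  by_cases hmn : m ≤ n
  · rw [sum_range_mul_eq_ite_comm (P := fun k m => (p k).coeff m) _ _ hmn, if_congr eq_comm rfl rfl]
    · intro k m hkm
      rw [hcoeff, if_neg (by omega)]
    · intro k m
      rw [← hPL]
      exact sum_congr rfl fun j hj => by rw [hcoeff, if_pos (by simpa [Nat.lt_succ_iff] using hj)]
  · rw [if_neg (by omega)]
    refine (sum_eq_zero fun k hk => ?_).symm
    rw [hcoeff, if_neg (by grind), mul_zero]

end LowerTriangular

theorem exp_riordan_moments_first_column_general
    (f g fbar h : PowerSeries ℝ)
    (hg0 : PowerSeries.constantCoeff (R := ℝ) g = 1)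
    (hfbar0 : PowerSeries.constantCoeff (R := ℝ) fbar = 0)
    (hfbar : psComp f fbar = PowerSeries.X)
    (hh : h = (psComp g fbar)⁻¹)
    (p : ℕ → Polynomial ℝ)
    (hp : ∀ n, p n = ∑ k ∈ Finset.range (n + 1),
      Polynomial.C (((n.factorial : ℝ) / (k.factorial : ℝ)) *
        PowerSeries.coeff (R := ℝ) n (h * fbar ^ k)) * Polynomial.X ^ k)
    (𝓛 : Polynomial ℝ →ₗ[ℝ] ℝ)
    (hL0 : 𝓛 (p 0) = 1)
    (hL : ∀ i, 1 ≤ i → 𝓛 (p i) = 0) :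
    ∀ n, 𝓛 (Polynomial.X ^ n) = (n.factorial : ℝ) * PowerSeries.coeff (R := ℝ) n g := by
  have hinv : h * g.subst fbar = 1 := by
    rw [hh, ← psComp_eq_subst g hfbar0]
    exact PowerSeries.inv_mul_cancel _ (by simp [constantCoeff_psComp, hg0])
  have hPL (n m : ℕ) : ∑ k ∈ range (n + 1), expRiordan h fbar n k * expRiordan g f k m =
      if n = m then 1 else 0 := by
    rw [sum_expRiordan_mul_expRiordan hfbar0, hinv, ← psComp_eq_subst f hfbar0, hfbar,
      expRiordan_one_X]
  intro n
  rw [X_pow_eq_sum_smul_of_sum_mul_eq_ite p hp hPL n, map_sum,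
    sum_eq_single_of_mem 0 (by simp) fun k _ hk => by rw [map_smul, hL k (by omega), smul_zero],
    map_smul, hL0, smul_eq_mul, mul_one, expRiordan]
  simp

/-- If the exponential Riordan array `L = [g, f]` has tridiagonal production matrix,
then the moments of the orthogonal polynomial family whose coefficient array is
`L⁻¹ = [1/(g∘f̄), f̄]` are the entries `n!·[xⁿ]g` of the first column of `L`. -/
theorem exp_riordan_moments_first_column (α β α₀ β₁ : ℝ)
    (f g fbar h : PowerSeries ℝ)
    (hf0 : PowerSeries.constantCoeff (R := ℝ) f = 0)
    (hf' : PowerSeries.derivative ℝ f = 1 + PowerSeries.C (R := ℝ) α * f + PowerSeries.C (R := ℝ) β * f ^ 2)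
    (hg0 : PowerSeries.constantCoeff (R := ℝ) g = 1)
    (hg' : PowerSeries.derivative ℝ g = (PowerSeries.C (R := ℝ) α₀ + PowerSeries.C (R := ℝ) β₁ * f) * g)
    (hfbar0 : PowerSeries.constantCoeff (R := ℝ) fbar = 0)
    (hfbar : psComp f fbar = PowerSeries.X)
    (hh : h = (psComp g fbar)⁻¹)
    (p : ℕ → Polynomial ℝ)
    (hp : ∀ n, p n = ∑ k ∈ Finset.range (n + 1),
      Polynomial.C (((n.factorial : ℝ) / (k.factorial : ℝ)) *
        PowerSeries.coeff (R := ℝ) n (h * fbar ^ k)) * Polynomial.X ^ k)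
    (𝓛 : Polynomial ℝ →ₗ[ℝ] ℝ)
    (hL0 : 𝓛 (p 0) = 1)
    (hL : ∀ i, 1 ≤ i → 𝓛 (p i) = 0) :
    ∀ n, 𝓛 (Polynomial.X ^ n) = (n.factorial : ℝ) * PowerSeries.coeff (R := ℝ) n g :=
  exp_riordan_moments_first_column_general f g fbar h hg0 hfbar0 hfbar hh p hp 𝓛 hL0 hL
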